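/- arXiv:2304.13485 — 3 statements merged into one kernel-verified Lean document; each statement's English description precedes it below -/
import Mathlib

section
/- Let F = {f_1,...,f_k} be a family of polynomials in K[x_1,...,x_n] with degree of regularity d_reg(F) = d < ∞ and deg(f_i) ≤ d for all i. Then for each monomial m of degree d there exists a polynomial p in V_{F,d} (the smallest K-linear subspace containing all elements of F of degree ≤ d and closed under multiplication by monomials as long as the degree stays ≤ d) such that the top homogeneous component of p equals m. -/
/-!
Regularity in degree `d` writes the monomial as `m = ∑ c_f · topPart f` over `f ∈ F`. Replacing
each `c_f` by its homogeneous component of degree `d - deg f` gives `p = ∑ c_f' · f`: every term is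
a combination of monomial multiples of `f` of degree at most `d`, so `p ∈ V_{F,d}`, and the
degree-`d` part of `c_f' · f` equals that of `c_f · topPart f`, so `p` has degree `d` and top
part `m`.
-/

open MvPolynomial

noncomputable section

/-- The total degree of a monomial exponent vector. -/
def mdeg {n : ℕ} (s : Fin n →₀ ℕ) : ℕ := s.sum fun _ e => e

/-- The top homogeneous component (homogeneous part of largest degree) of a polynomial. -/
def topPart {n : ℕ} {K : Type*} [CommSemiring K] (f : MvPolynomial (Fin n) K) :
    MvPolynomial (Fin n) K :=
  homogeneousComponent f.totalDegree f

/-- `regAt F d` says that the degree-`d` part of the ideal generated by the top homogeneous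
parts of the elements of `F` is all of `K[x₁,…,xₙ]_d`; the degree of regularity of `F` is the
least such `d`. -/
def regAt {n : ℕ} {K : Type*} [Field K] (F : Finset (MvPolynomial (Fin n) K)) (d : ℕ) : Prop :=
  ∀ p : MvPolynomial (Fin n) K, p.IsHomogeneous d →
    p ∈ Ideal.span (topPart '' (F : Set (MvPolynomial (Fin n) K)))

/-- `V F d` : the smallest `K`-linear subspace containing all elements of `F` of total degree
at most `d`, and closed under multiplication by monomials as long as the degree stays `≤ d`. -/
def V {n : ℕ} {K : Type*} [Field K] (F : Finset (MvPolynomial (Fin n) K)) (d : ℕ) :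
    Submodule K (MvPolynomial (Fin n) K) :=
  sInf {W | (∀ f ∈ F, f.totalDegree ≤ d → f ∈ W) ∧
    ∀ (s : Fin n →₀ ℕ), ∀ f ∈ W,
      (monomial s (1 : K) * f).totalDegree ≤ d → monomial s (1 : K) * f ∈ W}


namespace MvPolynomial

attribute [local instance] gradedAlgebra in
theorem homogeneousComponent_mul_of_isHomogeneous_right {σ R : Type*} [CommSemiring R]
    {g : MvPolynomial σ R} {k d : ℕ} (hg : g.IsHomogeneous k) (hk : k ≤ d)
    (c : MvPolynomial σ R) :
    homogeneousComponent d (c * g) = homogeneousComponent (d - k) c * g := by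
  have h := DirectSum.coe_decompose_mul_of_right_mem_of_le (homogeneousSubmodule σ R) (a := c) hg hk
  rwa [← decomposition.decompose'_apply, ← decomposition.decompose'_apply]

end MvPolynomial

section TopPart

variable {n : ℕ} {K : Type*} [CommSemiring K]

theorem topPart_isHomogeneous (f : MvPolynomial (Fin n) K) :
    (topPart f).IsHomogeneous f.totalDegree :=
  homogeneousComponent_isHomogeneous _ _

theorem homogeneousComponent_mul_topPart {f : MvPolynomial (Fin n) K} {d : ℕ}
    (hf : f.totalDegree ≤ d) (c : MvPolynomial (Fin n) K) :
    homogeneousComponent d (c * topPart f) =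
      homogeneousComponent d (homogeneousComponent (d - f.totalDegree) c * f) := by
  rw [homogeneousComponent_mul_of_isHomogeneous_right (topPart_isHomogeneous f) hf, mul_comm _ f,
    homogeneousComponent_mul_of_isHomogeneous_right (homogeneousComponent_isHomogeneous _ c)
      (Nat.sub_le _ _), Nat.sub_sub_self hf, topPart]
  exact mul_comm _ _

theorem topPart_eq_of_homogeneousComponent_eq {p h : MvPolynomial (Fin n) K} {d : ℕ}
    (hp : p.totalDegree ≤ d) (hpd : homogeneousComponent d p = h) (h0 : h ≠ 0) :
    topPart p = h := by
  have hdeg : p.totalDegree = d := by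
    refine le_antisymm hp (not_lt.1 fun hlt => h0 ?_)
    rw [← hpd, homogeneousComponent_eq_zero _ _ hlt]
  rw [topPart, hdeg, hpd]

end TopPart

section V

variable {n : ℕ} {K : Type*} [Field K] {F : Finset (MvPolynomial (Fin n) K)} {d : ℕ}

theorem mem_V_of_mem {f : MvPolynomial (Fin n) K} (hf : f ∈ F) (hfd : f.totalDegree ≤ d) :
    f ∈ V F d :=
  Submodule.mem_sInf.2 fun _ hW => hW.1 f hf hfd

theorem monomial_one_mul_mem_V {f : MvPolynomial (Fin n) K} (s : Fin n →₀ ℕ) (hf : f ∈ V F d)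
    (hsf : (monomial s (1 : K) * f).totalDegree ≤ d) : monomial s (1 : K) * f ∈ V F d :=
  Submodule.mem_sInf.2 fun W hW => hW.2 s f (Submodule.mem_sInf.1 hf W hW) hsf

theorem mul_mem_V {f q : MvPolynomial (Fin n) K} (hf : f ∈ V F d)
    (hqf : q.totalDegree + f.totalDegree ≤ d) : q * f ∈ V F d := by
  rw [q.as_sum, Finset.sum_mul]
  refine Submodule.sum_mem _ fun t ht => ?_
  rw [show monomial t (coeff t q) * f = coeff t q • (monomial t 1 * f) by
    rw [← smul_mul_assoc, smul_monomial, smul_eq_mul, mul_one]]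
  refine Submodule.smul_mem _ _ (monomial_one_mul_mem_V t hf ?_)
  calc (monomial t (1 : K) * f).totalDegree
      ≤ (monomial t (1 : K)).totalDegree + f.totalDegree := totalDegree_mul _ _
    _ ≤ q.totalDegree + f.totalDegree := by
      rw [totalDegree_monomial _ one_ne_zero]
      exact Nat.add_le_add_right (le_totalDegree ht) _
    _ ≤ d := hqf

end V

/-- Lemma 3.1: if `d_reg(F) = d < ∞` and all elements of `F` have degree `≤ d`, then for each
monomial of degree `d` there is `p ∈ V_{F,d}` whose top homogeneous part is that monomial. -/
theorem stmt0 {n : ℕ} {K : Type*} [Field K] (F : Finset (MvPolynomial (Fin n) K)) (d : ℕ)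
    (hdeg : ∀ f ∈ F, f.totalDegree ≤ d)
    (hreg : IsLeast {e | regAt F e} d) :
    ∀ s : Fin n →₀ ℕ, mdeg s = d → ∃ p ∈ V F d, topPart p = monomial s (1 : K) := by
  intro s hs
  have hmon : (monomial s (1 : K)).IsHomogeneous d := isHomogeneous_monomial 1 hs
  obtain ⟨c, hc⟩ := (Submodule.mem_span_image_finset_iff_exists_fun' _).1 (hreg.1 _ hmon)
  have hterm : ∀ f ∈ F,
      (homogeneousComponent (d - f.totalDegree) (c f)).totalDegree + f.totalDegree ≤ d := by
    intro f hf
    have := (homogeneousComponent_isHomogeneous (d - f.totalDegree) (c f)).totalDegree_le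
    have := hdeg f hf
    omega
  set p := ∑ f ∈ F, homogeneousComponent (d - f.totalDegree) (c f) * f
  have hp_deg : p.totalDegree ≤ d :=
    totalDegree_finsetSum_le fun f hf => (totalDegree_mul _ _).trans (hterm f hf)
  have hp_top : homogeneousComponent d p = monomial s 1 := by
    rw [← homogeneousComponent_eq_self hmon, ← hc, map_sum, map_sum]
    exact Finset.sum_congr rfl fun f hf => (homogeneousComponent_mul_topPart (hdeg f hf) _).symm
  refine ⟨p, Submodule.sum_mem _ fun f hf => mul_mem_V (mem_V_of_mem hf (hdeg f hf)) (hterm f hf),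
    topPart_eq_of_homogeneousComponent_eq hp_deg hp_top (monomial_eq_zero.not.2 one_ne_zero)⟩
end
end

section
/- If σ is a degree-compatible term order on K[x_1,...,x_n] and F is a finite family of polynomials, then the maximum degree of an element in the reduced Gröbner basis of the ideal (F) with respect to σ is at most d_reg(F). -/
/-!
Suppose `g` in the reduced Gröbner basis had `deg g > d`. Degree compatibility gives
`deg (lm g) = deg g`, so `lm g` has a proper divisor `ν` of degree `d`. By regularity `x^ν` lies in
the ideal of top parts of `F`; lifting a representation degree by degree yields `q ∈ (F)` of degree
`d` with top part `x^ν`, hence `lm q = ν`. The Gröbner property then gives `g' ∈ G` with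
`lm g' ∣ ν ∣ lm g`: `g' = g` is impossible for degree reasons, and `g' ≠ g` contradicts
reducedness.
-/

open MvPolynomial

noncomputable section

/-- The leading monomial (exponent vector) of `f` with respect to a monomial order. -/
def lm {n : ℕ} {K : Type*} [Field K] (m : MonomialOrder (Fin n))
    (f : MvPolynomial (Fin n) K) : Fin n →₀ ℕ :=
  m.toSyn.symm (f.support.sup fun s => m.toSyn s)

/-- A monomial order is degree-compatible if monomials of smaller degree are smaller. -/
def DegCompatible {n : ℕ} (m : MonomialOrder (Fin n)) : Prop :=
  ∀ s t : Fin n →₀ ℕ, mdeg s < mdeg t → m.toSyn s < m.toSyn t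

/-- `G` is a Gröbner basis of `I` w.r.t. `m` : `G ⊆ I` and the leading monomial of every
nonzero element of `I` is divisible by the leading monomial of some nonzero element of `G`. -/
def IsGrobnerBasis {n : ℕ} {K : Type*} [Field K] (m : MonomialOrder (Fin n))
    (I : Ideal (MvPolynomial (Fin n) K)) (G : Finset (MvPolynomial (Fin n) K)) : Prop :=
  (↑G : Set (MvPolynomial (Fin n) K)) ⊆ ↑I ∧
    ∀ f ∈ I, f ≠ 0 → ∃ g ∈ G, g ≠ 0 ∧ lm m g ≤ lm m f

/-- `G` is the reduced Gröbner basis: a Gröbner basis, monic, and no monomial occurring in an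
element of `G` is divisible by the leading monomial of another element of `G`. -/
def IsReducedGB {n : ℕ} {K : Type*} [Field K] (m : MonomialOrder (Fin n))
    (I : Ideal (MvPolynomial (Fin n) K)) (G : Finset (MvPolynomial (Fin n) K)) : Prop :=
  IsGrobnerBasis m I G ∧ (∀ g ∈ G, coeff (lm m g) g = 1) ∧
    ∀ g ∈ G, ∀ g' ∈ G, g ≠ g' → ∀ s ∈ g.support, ¬ lm m g' ≤ s

section HomogeneousComponent

variable {σ R : Type*} [CommSemiring R]

attribute [local instance] MvPolynomial.gradedAlgebra

theorem homogeneousComponent_mul_of_isHomogeneous_left {φ : MvPolynomial σ R} {i : ℕ}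
    (hφ : φ.IsHomogeneous i) (ψ : MvPolynomial σ R) (n : ℕ) :
    homogeneousComponent n (φ * ψ) = if i ≤ n then φ * homogeneousComponent (n - i) ψ else 0 := by
  simp only [← decomposition.decompose'_apply]
  exact DirectSum.coe_decompose_mul_of_left_mem _ n (show φ ∈ homogeneousSubmodule σ R i from hφ)

end HomogeneousComponent

section Lifting

variable {n : ℕ} {R : Type*} [CommSemiring R]

lemma homogeneousComponent_topPart (f : MvPolynomial (Fin n) R) (e : ℕ) :
    homogeneousComponent e (topPart f) = if e = f.totalDegree then topPart f else 0 :=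
  homogeneousComponent_of_mem (homogeneousComponent_isHomogeneous _ _)

theorem exists_mem_span_homogeneousComponent_eq {F : Set (MvPolynomial (Fin n) R)}
    {p : MvPolynomial (Fin n) R} (hp : p ∈ Ideal.span (topPart '' F)) (e : ℕ) :
    ∃ q ∈ Ideal.span F, q.totalDegree ≤ e ∧ homogeneousComponent e q = homogeneousComponent e p := by
  classical
  induction hp using Submodule.span_induction generalizing e with
  | mem x hx =>
    obtain ⟨f, hf, rfl⟩ := hx
    rw [homogeneousComponent_topPart]
    split_ifs with he
    · exact ⟨f, Ideal.subset_span hf, he.ge, he ▸ rfl⟩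
    · exact ⟨0, zero_mem _, by simp, by simp⟩
  | zero => exact ⟨0, zero_mem _, by simp, by simp⟩
  | add x y _ _ hx hy =>
    obtain ⟨qx, hqx, hqx_deg, hqx_eq⟩ := hx e
    obtain ⟨qy, hqy, hqy_deg, hqy_eq⟩ := hy e
    exact ⟨qx + qy, add_mem hqx hqy, (totalDegree_add _ _).trans (max_le hqx_deg hqy_deg),
      by rw [map_add, map_add, hqx_eq, hqy_eq]⟩
  | smul a x _ hx =>
    choose q hqI hq_deg hq_eq using hx
    -- split `a` into its homogeneous components and lift each product separately
    set J := (Finset.range (a.totalDegree + 1)).filter (· ≤ e)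
    refine ⟨∑ j ∈ J, homogeneousComponent j a * q (e - j), ?_, ?_, ?_⟩
    · exact sum_mem fun j _ => Ideal.mul_mem_left _ _ (hqI _)
    · refine (totalDegree_finsetSum _ _).trans (Finset.sup_le fun j hj => ?_)
      have hje : j ≤ e := (Finset.mem_filter.mp hj).2
      calc (homogeneousComponent j a * q (e - j)).totalDegree
          ≤ (homogeneousComponent j a).totalDegree + (q (e - j)).totalDegree := totalDegree_mul _ _
        _ ≤ j + (e - j) :=
          add_le_add (homogeneousComponent_isHomogeneous j a).totalDegree_le (hq_deg _)
        _ = e := by omega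
    · have hlift : ∀ j ∈ J, homogeneousComponent e (homogeneousComponent j a * q (e - j)) =
          homogeneousComponent e (homogeneousComponent j a * x) := fun j hj => by
        have hje : j ≤ e := (Finset.mem_filter.mp hj).2
        simp only [homogeneousComponent_mul_of_isHomogeneous_left
          (homogeneousComponent_isHomogeneous j a), if_pos hje, hq_eq]
      calc homogeneousComponent e (∑ j ∈ J, homogeneousComponent j a * q (e - j))
          = ∑ j ∈ J, homogeneousComponent e (homogeneousComponent j a * x) := by
            rw [map_sum]; exact Finset.sum_congr rfl hlift
        _ = ∑ j ∈ Finset.range (a.totalDegree + 1),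
              homogeneousComponent e (homogeneousComponent j a * x) := by
            refine Finset.sum_filter_of_ne fun j _ hne => ?_
            by_contra hje
            rw [homogeneousComponent_mul_of_isHomogeneous_left
              (homogeneousComponent_isHomogeneous j a), if_neg hje] at hne
            exact hne rfl
        _ = homogeneousComponent e (a • x) := by
            rw [← map_sum, ← Finset.sum_mul, sum_homogeneousComponent, smul_eq_mul]

end Lifting

section DegCompatible

variable {n : ℕ} {R : Type*} [CommSemiring R] {m : MonomialOrder (Fin n)}

lemma lm_eq_degree {K : Type*} [Field K] (f : MvPolynomial (Fin n) K) : lm m f = m.degree f := rfl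

theorem DegCompatible.degree_degree (hm : DegCompatible m) {f : MvPolynomial (Fin n) R}
    (hf : f ≠ 0) : (m.degree f).degree = f.totalDegree := by
  refine le_antisymm (le_totalDegree (m.degree_mem_support hf)) (Finset.sup_le fun s hs => ?_)
  by_contra! hlt
  exact (hm _ _ hlt).not_ge (m.le_degree hs)

theorem DegCompatible.degree_eq_of_homogeneousComponent_eq_monomial [Nontrivial R]
    (hm : DegCompatible m) {q : MvPolynomial (Fin n) R} {μ : Fin n →₀ ℕ}
    (hq : q.totalDegree ≤ μ.degree) (hμ : homogeneousComponent μ.degree q = monomial μ 1) :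
    m.degree q = μ := by
  have hcoeff : ∀ s : Fin n →₀ ℕ, s.degree = μ.degree → coeff s q = coeff s (monomial μ 1) :=
    fun s hs => by rw [← hμ, coeff_homogeneousComponent, if_pos hs]
  have hμq : μ ∈ q.support := by
    rw [mem_support_iff, hcoeff μ rfl, coeff_monomial, if_pos rfl]
    exact one_ne_zero
  have hq0 : q ≠ 0 := by
    rintro rfl
    simp at hμq
  have hdeg : (m.degree q).degree = μ.degree :=
    (hm.degree_degree hq0).trans (hq.antisymm (le_totalDegree hμq))
  have hlead := m.degree_mem_support hq0
  rw [mem_support_iff, hcoeff _ hdeg, coeff_monomial] at hlead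
  by_contra hne
  exact hlead (if_neg (Ne.symm hne))

end DegCompatible

theorem exists_mem_span_degree_eq_of_regAt {n : ℕ} {K : Type*} [Field K]
    {m : MonomialOrder (Fin n)} (hm : DegCompatible m) {F : Finset (MvPolynomial (Fin n) K)}
    {d : ℕ} (hF : regAt F d) {μ : Fin n →₀ ℕ} (hμ : d ≤ μ.degree) :
    ∃ q ∈ Ideal.span (F : Set (MvPolynomial (Fin n) K)), q ≠ 0 ∧ m.degree q = μ := by
  obtain ⟨t, htμ, ht_deg⟩ := μ.exists_le_degree_eq d hμ
  have hmon : monomial μ (1 : K) ∈ Ideal.span (topPart '' (F : Set (MvPolynomial (Fin n) K))) := by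
    rw [← tsub_add_cancel_of_le htμ, ← mul_one (1 : K), ← monomial_mul]
    exact Ideal.mul_mem_left _ _ (hF _ (isHomogeneous_monomial _ ht_deg))
  obtain ⟨q, hqI, hq_deg, hq_eq⟩ := exists_mem_span_homogeneousComponent_eq hmon μ.degree
  rw [homogeneousComponent_eq_self (isHomogeneous_monomial _ rfl)] at hq_eq
  refine ⟨q, hqI, ?_, hm.degree_eq_of_homogeneousComponent_eq_monomial hq_deg hq_eq⟩
  rintro rfl
  rw [map_zero, eq_comm, monomial_eq_zero] at hq_eq
  exact one_ne_zero hq_eq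

/-- Remark 2.3: for a degree-compatible term order, the maximal degree of an element of the
reduced Gröbner basis of `(F)` is at most the degree of regularity of `F`. -/
theorem stmt5 {n : ℕ} {K : Type*} [Field K] (m : MonomialOrder (Fin n)) (hm : DegCompatible m)
    (F : Finset (MvPolynomial (Fin n) K)) (d : ℕ)
    (hreg : IsLeast {e | regAt F e} d)
    (G : Finset (MvPolynomial (Fin n) K))
    (hG : IsReducedGB m (Ideal.span (F : Set (MvPolynomial (Fin n) K))) G) :
    ∀ g ∈ G, g.totalDegree ≤ d := by
  obtain ⟨⟨-, hGB⟩, hmonic, hreduced⟩ := hG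
  simp only [lm_eq_degree] at hGB hmonic hreduced
  intro g hg
  by_contra! hdeg
  have hg_supp : m.degree g ∈ g.support := by simp [hmonic g hg]
  have hg0 : g ≠ 0 := by
    rintro rfl
    simp at hg_supp
  obtain ⟨ν, hν, hν_deg⟩ := (m.degree g).exists_le_degree_eq d
    (hm.degree_degree hg0 ▸ hdeg.le)
  obtain ⟨q, hqI, hq0, rfl⟩ := exists_mem_span_degree_eq_of_regAt hm hreg.1 hν_deg.ge
  obtain ⟨g', hg', -, hle⟩ := hGB q hqI hq0
  by_cases hgg : g = g'
  · subst hgg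
    have hdeg_le := Finsupp.degree_mono hle
    rw [hm.degree_degree hg0] at hdeg_le
    omega
  · exact hreduced g hg g' hg' hgg _ hg_supp (hle.trans hν)
end
end

section
/- Let F = {x^k + y, y^k + x, xy} ⊆ K[x,y] with k > 1. Then the polynomial x does not belong to V_{F,k}, the smallest K-linear space containing F and closed under monomial multiplication within degree k. -/
/-!
`V_{F,k}` lies in every subspace `W` that contains `F` and is stable under multiplication by
monomials within degree `k`. Take for `W` the polynomials whose coefficients at the pure powers
`x_i^a` with `a < k` all vanish, except that the coefficient of `x_i` must equal that of
`x_{1-i}^k`. If `m` is a nonconstant monomial and `deg (m f) ≤ k`, then `m f` has no pure-power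
terms of degree `≤ k`: they could only come from terms `x_i^b` of `f` with `b < k`, and the only
such coefficient not forced to vanish is that of `x_i`, which equals the coefficient of
`x_{1-i}^k`; that one is zero because `m x_{1-i}^k` has degree `> k`. So `W` is stable, and it
contains `F` but not `x`, whose coefficient `1` differs from its coefficient `0` at `y^k`.
-/

open MvPolynomial

noncomputable section

theorem V_le_of_closed {n : ℕ} {K : Type*} [Field K] {F : Finset (MvPolynomial (Fin n) K)}
    {d : ℕ} {W : Submodule K (MvPolynomial (Fin n) K)}
    (hF : ∀ f ∈ F, f.totalDegree ≤ d → f ∈ W)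
    (hmul : ∀ (s : Fin n →₀ ℕ), ∀ f ∈ W,
      (monomial s (1 : K) * f).totalDegree ≤ d → monomial s (1 : K) * f ∈ W) :
    V F d ≤ W :=
  sInf_le ⟨hF, hmul⟩

theorem Finsupp.eq_single_of_le_single {ι : Type*} {s : ι →₀ ℕ} {i : ι} {a : ℕ}
    (h : s ≤ Finsupp.single i a) : s = Finsupp.single i (s i) := by
  ext j
  obtain rfl | hj := eq_or_ne j i
  · simp
  · simpa [Finsupp.single_eq_of_ne hj] using h j

namespace MvPolynomial

variable {σ R : Type*} [CommSemiring R]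

theorem coeff_eq_zero_of_totalDegree_monomial_mul_lt {s t : σ →₀ ℕ} {f : MvPolynomial σ R}
    (h : (monomial s (1 : R) * f).totalDegree < s.degree + t.degree) : coeff t f = 0 := by
  by_contra ht
  have hmem : s + t ∈ (monomial s (1 : R) * f).support := by
    rwa [mem_support_iff, coeff_monomial_mul, one_mul]
  have hdeg : (s + t).degree ≤ _ := le_totalDegree hmem
  rw [map_add] at hdeg
  omega

end MvPolynomial

-- The index `a = 0` covers the constant term, since `Finsupp.single i 0 = 0`.
def pureCoeffSubmodule (K : Type*) [CommSemiring K] (k : ℕ) :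
    Submodule K (MvPolynomial (Fin 2) K) :=
  ⨅ (i : Fin 2) (a : ℕ) (_ : a < k),
    LinearMap.eqLocus (lcoeff K (Finsupp.single i a))
      (if a = 1 then lcoeff K (Finsupp.single i.rev k) else 0)

namespace pureCoeffSubmodule

variable {K : Type*} [CommSemiring K] {k : ℕ}

theorem mem_iff {f : MvPolynomial (Fin 2) K} :
    f ∈ pureCoeffSubmodule K k ↔ ∀ (i : Fin 2) (a : ℕ), a < k →
      coeff (Finsupp.single i a) f = if a = 1 then coeff (Finsupp.single i.rev k) f else 0 := by
  simp only [pureCoeffSubmodule, Submodule.mem_iInf, LinearMap.mem_eqLocus, lcoeff_apply]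
  refine forall₂_congr fun i a => forall_congr' fun _ => ?_
  split_ifs <;> simp

theorem coeff_single_monomial_mul_eq_zero {s : Fin 2 →₀ ℕ} (hs : s ≠ 0)
    {f : MvPolynomial (Fin 2) K} (hf : f ∈ pureCoeffSubmodule K k)
    (hdeg : (monomial s (1 : K) * f).totalDegree ≤ k) (i : Fin 2) {a : ℕ} (ha : a ≤ k) :
    coeff (Finsupp.single i a) (monomial s (1 : K) * f) = 0 := by
  rw [coeff_monomial_mul']
  split_ifs with hle
  · obtain ⟨b, rfl⟩ : ∃ b, s = Finsupp.single i b := ⟨_, Finsupp.eq_single_of_le_single hle⟩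
    have hb_pos : 0 < b := Nat.pos_of_ne_zero fun h => hs (by rw [h, Finsupp.single_zero])
    have hb_le : b ≤ a := Finsupp.single_le_single.1 hle
    rw [one_mul, ← Finsupp.single_tsub, mem_iff.1 hf i _ (by omega)]
    split_ifs
    · refine coeff_eq_zero_of_totalDegree_monomial_mul_lt (hdeg.trans_lt ?_)
      rw [Finsupp.degree_single, Finsupp.degree_single]
      omega
    · rfl
  · rfl

theorem monomial_mul_mem (s : Fin 2 →₀ ℕ) {f : MvPolynomial (Fin 2) K}
    (hf : f ∈ pureCoeffSubmodule K k) (hdeg : (monomial s (1 : K) * f).totalDegree ≤ k) :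
    monomial s (1 : K) * f ∈ pureCoeffSubmodule K k := by
  obtain rfl | hs := eq_or_ne s 0
  · rwa [monomial_zero', C_1, one_mul]
  refine mem_iff.2 fun i a ha => ?_
  rw [coeff_single_monomial_mul_eq_zero hs hf hdeg i ha.le,
    coeff_single_monomial_mul_eq_zero hs hf hdeg i.rev le_rfl, ite_self]

theorem X_pow_add_X_mem (hk : 1 < k) (i : Fin 2) :
    X i ^ k + X i.rev ∈ pureCoeffSubmodule K k := by
  refine mem_iff.2 fun j a ha => ?_
  fin_cases i <;> fin_cases j <;>
    simp [coeff_X_pow, coeff_X, Finsupp.single_eq_single_iff, hk.ne, ha.ne',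
      (zero_lt_one.trans hk).ne', eq_comm (a := 1)]

theorem X_mul_X_mem : (X 0 * X 1 : MvPolynomial (Fin 2) K) ∈ pureCoeffSubmodule K k := by
  refine mem_iff.2 fun j a ha => ?_
  fin_cases j <;> simp [coeff_mul_X', coeff_X, ← Finsupp.single_tsub, Finsupp.single_eq_single_iff]

theorem X_notMem [Nontrivial K] (hk : 1 < k) (i : Fin 2) :
    (X i : MvPolynomial (Fin 2) K) ∉ pureCoeffSubmodule K k := by
  intro h
  have := mem_iff.1 h i 1 hk
  fin_cases i <;> simp [coeff_X, Finsupp.single_eq_single_iff] at this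

end pureCoeffSubmodule

/-- Lower-bound half of the optimality example: for `F = {x^k + y, y^k + x, xy}` with `k > 1`,
the polynomial `x` does not belong to `V_{F,k}`. -/
theorem stmt17 (K : Type*) [Field K] [DecidableEq K] (k : ℕ) (hk : 1 < k) :
    (X 0 : MvPolynomial (Fin 2) K) ∉
      V ({(X 0) ^ k + X 1, (X 1) ^ k + X 0, X 0 * X 1} :
        Finset (MvPolynomial (Fin 2) K)) k := by
  have hF : ∀ f ∈ ({(X 0) ^ k + X 1, (X 1) ^ k + X 0, X 0 * X 1} :
      Finset (MvPolynomial (Fin 2) K)), f ∈ pureCoeffSubmodule K k := by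
    simp only [Finset.mem_insert, Finset.mem_singleton, forall_eq_or_imp, forall_eq]
    exact ⟨pureCoeffSubmodule.X_pow_add_X_mem hk 0, pureCoeffSubmodule.X_pow_add_X_mem hk 1,
      pureCoeffSubmodule.X_mul_X_mem⟩
  have hV : V _ k ≤ pureCoeffSubmodule K k :=
    V_le_of_closed (fun f hf _ => hF f hf) fun s _ => pureCoeffSubmodule.monomial_mul_mem s
  exact fun hx => pureCoeffSubmodule.X_notMem hk 0 (hV hx)
end
end
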